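/- There exists a constant c > 0 and an infinite family of player-specific congestion games on circles with corresponding initial states such that the expected number of steps until the random best response dynamics started in the initial state reaches a Nash equilibrium is at least c·n^2, where n is the number of players. Concretely, for every even n ≥ 4 one may take the circle game in which all n players are of type 3 and the initial state in which players 0,…,n/2−1 play their 0-strategy and players n/2,…,n−1 play their 1-strategy. -/

import Mathlib

open scoped ENNReal NNReal

/-- A player-specific singleton congestion game on a circle with `n` players:
the resources are `0, …, n-1`, and player `i` chooses between resource `i`
(its 0-strategy, with delay function `d0 i`) and resource `i+1 (mod n)`
(its 1-strategy, with delay function `d1 i`). The delay functions are strictly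
increasing and ties are broken (for each player the delays of its two resources
at congestions `1 ≤ k ≤ n` are pairwise distinct). -/
structure CircleGame (n : ℕ) where
  d0 : Fin n → ℕ → ℕ
  d1 : Fin n → ℕ → ℕ
  mono0 : ∀ i, StrictMono (d0 i)
  mono1 : ∀ i, StrictMono (d1 i)
  tie : ∀ i : Fin n, ∀ k, 1 ≤ k → k ≤ n → ∀ k', 1 ≤ k' → k' ≤ n → d0 i k ≠ d1 i k'

namespace CircleGame

variable {n : ℕ} [NeZero n]

/-- A state is a function `s : Fin n → Bool`: `s i = false` iff player `i` plays its
0-strategy (resource `i`), and `s i = true` iff it plays its 1-strategy (resource `i+1`).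
`cong s r` is the congestion of resource `r`: resource `r` is allocated by player `r`
(if it plays its 0-strategy) and by player `r-1` (if it plays its 1-strategy). -/
def cong (s : Fin n → Bool) (r : Fin n) : ℕ :=
  (if s r = false then 1 else 0) + (if s (r - 1) = true then 1 else 0)

/-- The current resource of player `i` is a best response to state `s`. -/
def CurrentBR (G : CircleGame n) (s : Fin n → Bool) (i : Fin n) : Prop :=
  if s i = false then G.d0 i (cong s i) ≤ G.d1 i (cong s (i + 1) + 1)
  else G.d1 i (cong s (i + 1)) ≤ G.d0 i (cong s i + 1)

/-- One best-response step: a player whose current resource is not a best response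
switches to its (unique) other resource, which is then its best response. -/
def Step (G : CircleGame n) (s s' : Fin n → Bool) : Prop :=
  ∃ i, ¬ G.CurrentBR s i ∧ s' = Function.update s i (!(s i))

/-- Nash equilibrium: every player's current resource is a best response. -/
def IsNash (G : CircleGame n) (s : Fin n → Bool) : Prop := ∀ i, G.CurrentBR s i

/-- type 1 : `d_{r_i}(1) < d_{r_i}(2) < d_{r_{i+1}}(1) < d_{r_{i+1}}(2)`. -/
def IsType1 (G : CircleGame n) (i : Fin n) : Prop :=
  G.d0 i 1 < G.d0 i 2 ∧ G.d0 i 2 < G.d1 i 1 ∧ G.d1 i 1 < G.d1 i 2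

/-- type 1' : roles of the two resources exchanged. -/
def IsType1' (G : CircleGame n) (i : Fin n) : Prop :=
  G.d1 i 1 < G.d1 i 2 ∧ G.d1 i 2 < G.d0 i 1 ∧ G.d0 i 1 < G.d0 i 2

/-- type 2 : `d_{r_i}(1) < d_{r_{i+1}}(1) < d_{r_i}(2) < d_{r_{i+1}}(2)`. -/
def IsType2 (G : CircleGame n) (i : Fin n) : Prop :=
  G.d0 i 1 < G.d1 i 1 ∧ G.d1 i 1 < G.d0 i 2 ∧ G.d0 i 2 < G.d1 i 2

/-- type 2' : roles of the two resources exchanged. -/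
def IsType2' (G : CircleGame n) (i : Fin n) : Prop :=
  G.d1 i 1 < G.d0 i 1 ∧ G.d0 i 1 < G.d1 i 2 ∧ G.d1 i 2 < G.d0 i 2

/-- type 3 : `d_{r_i}(1) < d_{r_{i+1}}(1) < d_{r_{i+1}}(2) < d_{r_i}(2)`. -/
def IsType3 (G : CircleGame n) (i : Fin n) : Prop :=
  G.d0 i 1 < G.d1 i 1 ∧ G.d1 i 1 < G.d1 i 2 ∧ G.d1 i 2 < G.d0 i 2

/-- type 3' : roles of the two resources exchanged. -/
def IsType3' (G : CircleGame n) (i : Fin n) : Prop :=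
  G.d1 i 1 < G.d0 i 1 ∧ G.d0 i 1 < G.d0 i 2 ∧ G.d0 i 2 < G.d1 i 2

/-- Resource `r_i` is a termination point for overload tokens: the pair of types of
players `i-1` and `i` is one of `(2',2), (3,3'), (3,2), (2',3')`. -/
def OverloadTP (G : CircleGame n) (i : Fin n) : Prop :=
  (G.IsType2' (i - 1) ∧ G.IsType2 i) ∨ (G.IsType3 (i - 1) ∧ G.IsType3' i) ∨
  (G.IsType3 (i - 1) ∧ G.IsType2 i) ∨ (G.IsType2' (i - 1) ∧ G.IsType3' i)

/-- Resource `r_i` is a termination point for underload tokens: the pair of types of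
players `i-1` and `i` is one of `(2,2'), (3,3'), (2,3'), (3,2')`. -/
def UnderloadTP (G : CircleGame n) (i : Fin n) : Prop :=
  (G.IsType2 (i - 1) ∧ G.IsType2' i) ∨ (G.IsType3 (i - 1) ∧ G.IsType3' i) ∨
  (G.IsType2 (i - 1) ∧ G.IsType3' i) ∨ (G.IsType3 (i - 1) ∧ G.IsType2' i)

open scoped Classical in
/-- The set of players whose current resource is not a best response. -/
noncomputable def unsat (G : CircleGame n) (s : Fin n → Bool) : Finset (Fin n) :=
  Finset.univ.filter fun i => ¬ G.CurrentBR s i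

/-- One step of the random best response dynamics: in a state that is not a Nash
equilibrium, a player whose current resource is not a best response is selected
uniformly at random and switches to its best response; Nash equilibria are absorbing. -/
noncomputable def stepPMF (G : CircleGame n) (s : Fin n → Bool) : PMF (Fin n → Bool) :=
  if h : (G.unsat s).Nonempty then
    (PMF.uniformOfFinset (G.unsat s) h).bind fun i => PMF.pure (Function.update s i (!(s i)))
  else PMF.pure s

/-- The distribution of the random best response dynamics after `t` steps, started in `s`. -/
noncomputable def walk (G : CircleGame n) (s : Fin n → Bool) : ℕ → PMF (Fin n → Bool)
  | 0 => PMF.pure s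
  | t + 1 => (walk G s t).bind G.stepPMF

open scoped Classical in
/-- The expected number of steps until the random best response dynamics started in `s`
reaches a Nash equilibrium: since Nash equilibria are absorbing, this is
`∑_{t ≥ 0} Pr[X_t is not a Nash equilibrium]`. -/
noncomputable def expTime (G : CircleGame n) (s : Fin n → Bool) : ℝ≥0∞ :=
  ∑' t : ℕ, ∑ s' ∈ Finset.univ.filter (fun s' => ¬ G.IsNash s'), G.walk s t s'

end CircleGame

/-!
A type-3 player is unsatisfied exactly when its strategy differs from that of its predecessor on
the circle. Going around the circle, the switches from 0- to 1-strategy are as many as the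
switches back, so the selected player raises or lowers the number `k` of players on their
1-strategy with probability `1/2` each. Hence `k (n - k)` drops by exactly `1` in expectation per
step, and it vanishes at Nash equilibria (constant states); a drift argument bounds the expected
number of steps from below by its initial value `(n/2)^2`.
-/

open Finset Filter Topology

namespace PMF

variable {α β : Type*}

noncomputable def expect (p : PMF α) (f : α → ℝ≥0∞) : ℝ≥0∞ := ∑' a, p a * f a

theorem expect_bind (p : PMF α) (q : α → PMF β) (f : β → ℝ≥0∞) :
    (p.bind q).expect f = p.expect fun a => (q a).expect f :=
  calc ∑' b, (∑' a, p a * q a b) * f b = ∑' b, ∑' a, p a * (q a b * f b) := by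
        simp_rw [← ENNReal.tsum_mul_right, mul_assoc]
    _ = ∑' a, p a * ∑' b, q a b * f b := by
        simp_rw [← ENNReal.tsum_mul_left]; exact ENNReal.tsum_comm

theorem expect_pure (a : α) (f : α → ℝ≥0∞) : (pure a).expect f = f a := by
  rw [expect, tsum_eq_single a fun b hb => by simp [hb]]
  simp

theorem expect_uniformOfFinset (s : Finset α) (hs : s.Nonempty) (f : α → ℝ≥0∞) :
    (uniformOfFinset s hs).expect f = (#s : ℝ≥0∞)⁻¹ * ∑ a ∈ s, f a := by
  rw [expect, tsum_eq_sum (s := s) fun a ha => by simp [ha], mul_sum]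
  refine sum_congr rfl fun a ha => ?_
  simp [ha]

/-- `f (X_t) + #{s < t | X_s ∈ B}` is a submartingale, and `μ t B → 0` when the right-hand side
is finite, so the bounded `f`, which vanishes off `B`, has expectation tending to `0`. -/
theorem expect_le_tsum_toOuterMeasure_of_drift (κ : α → PMF α) (μ : ℕ → PMF α)
    (hμ : ∀ t, μ (t + 1) = (μ t).bind κ) {f : α → ℝ≥0∞} {B : Set α} {M : ℝ≥0∞} (hM : M ≠ ∞)
    (hf : ∀ x, f x ≤ M) (hf_zero : ∀ x ∉ B, f x = 0)
    (hdrift : ∀ x ∈ B, f x ≤ (κ x).expect f + 1) :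
    (μ 0).expect f ≤ ∑' t, (μ t).toOuterMeasure B := by
  set P : ℕ → ℝ≥0∞ := fun t => (μ t).toOuterMeasure B
  have hP : ∀ t, P t = ∑' x, μ t x * B.indicator 1 x := fun t => by
    simp only [P, toOuterMeasure_apply, ← Set.indicator_mul_right, Pi.one_apply, mul_one]
  have step : ∀ t, (μ t).expect f ≤ (μ (t + 1)).expect f + P t := fun t => by
    rw [hμ, expect_bind, hP, expect, expect, ← ENNReal.tsum_add]
    refine ENNReal.tsum_le_tsum fun x => ?_
    rw [← mul_add]
    gcongr
    by_cases hx : x ∈ B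
    · simpa [hx] using hdrift x hx
    · simp [hf_zero x hx]
  have telescope : ∀ T, (μ 0).expect f ≤ (μ T).expect f + ∑ t ∈ range T, P t := by
    intro T
    induction T with
    | zero => simp
    | succ T ih =>
      calc (μ 0).expect f ≤ (μ T).expect f + ∑ t ∈ range T, P t := ih
        _ ≤ (μ (T + 1)).expect f + P T + ∑ t ∈ range T, P t := by gcongr; exact step T
        _ = (μ (T + 1)).expect f + ∑ t ∈ range (T + 1), P t := by
          rw [sum_range_succ, add_assoc, add_comm (P T)]
  have tail : ∀ T, (μ T).expect f ≤ M * P T := fun T => by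
    rw [hP, expect, ← ENNReal.tsum_mul_left]
    refine ENNReal.tsum_le_tsum fun x => ?_
    by_cases hx : x ∈ B
    · simpa [hx, mul_comm] using mul_le_mul_right (hf x) (μ T x)
    · simp [hf_zero x hx]
  by_cases hfin : ∑' t, P t = ∞
  · rw [hfin]; exact le_top
  have hlim : Tendsto (fun T => M * P T + ∑' t, P t) atTop (𝓝 (∑' t, P t)) := by
    simpa using (ENNReal.Tendsto.const_mul (ENNReal.tendsto_atTop_zero_of_tsum_ne_top hfin)
      (Or.inr hM)).add_const (∑' t, P t)
  refine ge_of_tendsto' hlim fun T => (telescope T).trans ?_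
  gcongr
  · exact tail T
  · exact ENNReal.sum_le_tsum _

end PMF

theorem card_filter_descent_eq_card_filter_ascent {G : Type*} [AddGroup G] [Fintype G]
    (s : G → Bool) (a : G) :
    #{i | s (i - a) = true ∧ s i = false} = #{i | s (i - a) = false ∧ s i = true} := by
  have pointwise : ∀ i, (if s (i - a) = true ∧ s i = false then 1 else 0) + (if s i then 1 else 0)
      = (if s (i - a) = false ∧ s i = true then 1 else 0) + (if s (i - a) then 1 else 0) := by
    intro i; cases s i <;> cases s (i - a) <;> rfl
  have shift : ∑ i, (if s (i - a) then 1 else 0) = ∑ i, (if s i then 1 else 0) :=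
    Fintype.sum_equiv (Equiv.subRight a) _ _ fun _ => rfl
  have total := sum_congr rfl fun i (_ : i ∈ univ) => pointwise i
  rw [sum_add_distrib, sum_add_distrib, shift] at total
  simpa only [card_filter] using add_right_cancel total

open Fin.NatCast in
theorem Fin.apply_eq_of_forall_apply_sub_one_eq {n : ℕ} [NeZero n] {α : Type*} {s : Fin n → α}
    (h : ∀ i, s (i - 1) = s i) (i : Fin n) : s i = s 0 := by
  have hcast : ∀ k : ℕ, s k = s 0 := by
    intro k
    induction k with
    | zero => simp
    | succ k ih => rw [← ih, ← h, Nat.cast_succ, add_sub_cancel_right]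
  simpa using hcast i

theorem Nat.add_one_mul_sub_add_sub_one_mul_sub {k n : ℕ} (hk : 0 < k) (hkn : k < n) :
    (k + 1) * (n - (k + 1)) + 1 + ((k - 1) * (n - (k - 1)) + 1) = 2 * (k * (n - k)) := by
  obtain ⟨a, rfl⟩ : ∃ a, k = a + 1 := ⟨k - 1, by omega⟩
  obtain ⟨b, rfl⟩ : ∃ b, n = a + 2 + b := ⟨n - (a + 2), by omega⟩
  rw [show a + 2 + b - (a + 1 + 1) = b by omega, show a + 2 + b - (a + 1 - 1) = b + 2 by omega,
    show a + 2 + b - (a + 1) = b + 1 by omega, add_tsub_cancel_right]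
  ring

namespace CircleGame

section Potential

variable {n : ℕ}

def numOne (s : Fin n → Bool) : ℕ := #{i | s i = true}

def potential (s : Fin n → Bool) : ℕ := numOne s * (n - numOne s)

theorem numOne_decide_le {k : ℕ} (hk : k ≤ n) :
    numOne (fun i : Fin n => decide (k ≤ (i : ℕ))) = n - k := by
  have := card_filter_add_card_filter_not (s := (univ : Finset (Fin n))) (fun i => (i : ℕ) < k)
  simp only [Fin.card_filter_val_lt, card_univ, Fintype.card_fin, not_lt] at this
  simp only [numOne, decide_eq_true_eq]
  omega

theorem numOne_update_not (s : Fin n → Bool) (i : Fin n) :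
    numOne (Function.update s i (!s i)) = if s i then numOne s - 1 else numOne s + 1 := by
  unfold numOne
  cases hi : s i
  · rw [if_neg (by simp), ← card_insert_of_notMem (s := {j | s j = true}) (a := i) (by simp [hi])]
    congr 1
    ext j
    by_cases hj : j = i <;> simp [hj, hi, Function.update_of_ne]
  · rw [if_pos rfl, ← card_erase_of_mem (s := {j | s j = true}) (a := i) (by simp [hi])]
    congr 1
    ext j
    by_cases hj : j = i <;> simp [hj, hi, Function.update_of_ne]

theorem potential_le (s : Fin n → Bool) : potential s ≤ n * n :=
  Nat.mul_le_mul ((card_filter_le _ _).trans_eq (card_fin n)) (Nat.sub_le n _)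

theorem potential_eq_zero_of_forall_apply_sub_one_eq [NeZero n] {s : Fin n → Bool}
    (h : ∀ i, s (i - 1) = s i) : potential s = 0 := by
  have hconst := Fin.apply_eq_of_forall_apply_sub_one_eq h
  cases h0 : s 0
  · have : numOne s = 0 := by simp [numOne, hconst, h0]
    simp [potential, this]
  · have : numOne s = n := by simp [numOne, hconst, h0]
    simp [potential, this]

end Potential

variable {n : ℕ} [NeZero n] {G : CircleGame n}

theorem not_currentBR_iff {i : Fin n} (hi : G.IsType3 i) (s : Fin n → Bool) :
    ¬ G.CurrentBR s i ↔ s (i - 1) ≠ s i := by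
  obtain ⟨h1, h2, h3⟩ := hi
  unfold CurrentBR cong
  rw [add_sub_cancel_right]
  cases s i <;> cases s (i - 1) <;> cases s (i + 1) <;> simp <;> omega

theorem unsat_eq_filter_apply_sub_one_ne (hG : ∀ i, G.IsType3 i) (s : Fin n → Bool) :
    G.unsat s = ({i | s (i - 1) ≠ s i} : Finset (Fin n)) := by
  ext i
  simp [unsat, not_currentBR_iff (hG i)]

theorem potential_eq_zero_of_isNash (hG : ∀ i, G.IsType3 i) {s : Fin n → Bool}
    (hs : G.IsNash s) : potential s = 0 :=
  potential_eq_zero_of_forall_apply_sub_one_eq fun i =>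
    not_not.mp <| mt (not_currentBR_iff (hG i) s).mpr (not_not.mpr (hs i))

theorem card_filter_unsat_false_eq_card_filter_unsat_true (hG : ∀ i, G.IsType3 i)
    (s : Fin n → Bool) :
    #{i ∈ G.unsat s | s i = false} = #{i ∈ G.unsat s | s i = true} := by
  simp only [unsat_eq_filter_apply_sub_one_ne hG, filter_filter]
  convert card_filter_descent_eq_card_filter_ascent s 1 using 2 <;>
  · ext i
    simp only [mem_filter, mem_univ, true_and]
    cases s i <;> cases s (i - 1) <;> simp

theorem sum_unsat_potential_update_add_one (hG : ∀ i, G.IsType3 i) (s : Fin n → Bool) :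
    ∑ i ∈ G.unsat s, (potential (Function.update s i (!s i)) + 1)
      = #(G.unsat s) * potential s := by
  set k := numOne s
  obtain ⟨u, hu_true⟩ : ∃ u, #{i ∈ G.unsat s | s i = true} = u := ⟨_, rfl⟩
  have hu_false : #{i ∈ G.unsat s | s i = false} = u :=
    (card_filter_unsat_false_eq_card_filter_unsat_true hG s).trans hu_true
  have hpot : ∀ i, potential (Function.update s i (!s i))
      = if s i then (k - 1) * (n - (k - 1)) else (k + 1) * (n - (k + 1)) := fun i => by
    rw [potential, numOne_update_not]; split_ifs <;> rfl
  have hsum_false : ∑ i ∈ G.unsat s with s i = false,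
      (potential (Function.update s i (!s i)) + 1) = u * ((k + 1) * (n - (k + 1)) + 1) := by
    rw [← hu_false, ← smul_eq_mul, ← sum_const]
    exact sum_congr rfl fun i hi => by rw [hpot, if_neg (by simp_all)]
  have hsum_true : ∑ i ∈ G.unsat s with s i = true,
      (potential (Function.update s i (!s i)) + 1) = u * ((k - 1) * (n - (k - 1)) + 1) := by
    rw [← hu_true, ← smul_eq_mul, ← sum_const]
    exact sum_congr rfl fun i hi => by rw [hpot, if_pos (by simp_all)]
  rw [← sum_filter_add_sum_filter_not _ (fun i => s i = false),
    ← card_filter_add_card_filter_not (fun i => s i = false)]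
  simp only [Bool.not_eq_false]
  rw [hsum_false, hsum_true, hu_false, hu_true]
  rcases Nat.eq_zero_or_pos u with hu | hu
  · simp [hu]
  obtain ⟨i, hi⟩ := card_pos.mp (hu_true ▸ hu)
  obtain ⟨j, hj⟩ := card_pos.mp (hu_false ▸ hu)
  have hk_pos : 0 < k := card_pos.mpr ⟨i, by simp_all⟩
  have hk_lt : k < n := (card_lt_univ_of_notMem (x := j) (by simp_all)).trans_eq (card_fin n)
  rw [← mul_add, Nat.add_one_mul_sub_add_sub_one_mul_sub hk_pos hk_lt, potential]
  ring

theorem expect_stepPMF {s : Fin n → Bool} (hs : (G.unsat s).Nonempty) (f : (Fin n → Bool) → ℝ≥0∞) :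
    (G.stepPMF s).expect f
      = (#(G.unsat s) : ℝ≥0∞)⁻¹ * ∑ i ∈ G.unsat s, f (Function.update s i (!s i)) := by
  simp only [stepPMF, dif_pos hs, PMF.expect_bind, PMF.expect_pure, PMF.expect_uniformOfFinset]

theorem potential_le_expect_stepPMF_add_one (hG : ∀ i, G.IsType3 i) {s : Fin n → Bool}
    (hs : ¬ G.IsNash s) :
    (potential s : ℝ≥0∞) ≤ (G.stepPMF s).expect (fun s' => potential s') + 1 := by
  have hU : (G.unsat s).Nonempty := by
    obtain ⟨i, hi⟩ := not_forall.mp hs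
    exact ⟨i, by simpa [unsat] using hi⟩
  have hU0 : (#(G.unsat s) : ℝ≥0∞) ≠ 0 := by simpa using hU.ne_empty
  have hsum : ∑ i ∈ G.unsat s, (potential (Function.update s i (!s i)) : ℝ≥0∞) + #(G.unsat s)
      = #(G.unsat s) * potential s := by
    have := sum_unsat_potential_update_add_one hG s
    rw [sum_add_distrib, sum_const, smul_eq_mul, mul_one] at this
    exact_mod_cast this
  rw [expect_stepPMF hU, ← ENNReal.inv_mul_cancel hU0 (ENNReal.natCast_ne_top _), ← mul_add,
    hsum, ← mul_assoc, ENNReal.inv_mul_cancel hU0 (ENNReal.natCast_ne_top _), one_mul]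

theorem expTime_eq_tsum_toOuterMeasure (s : Fin n → Bool) :
    G.expTime s = ∑' t, (G.walk s t).toOuterMeasure {s' | ¬ G.IsNash s'} := by
  simp only [expTime, ← PMF.toOuterMeasure_apply_finset, coe_filter_univ]

theorem potential_le_expTime (hG : ∀ i, G.IsType3 i) (s : Fin n → Bool) :
    (potential s : ℝ≥0∞) ≤ G.expTime s := by
  rw [expTime_eq_tsum_toOuterMeasure]
  have := PMF.expect_le_tsum_toOuterMeasure_of_drift G.stepPMF (G.walk s) (fun t => rfl)
    (B := {s' | ¬ G.IsNash s'}) (ENNReal.natCast_ne_top (n * n))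
    (fun x => by exact_mod_cast potential_le x)
    (fun x hx => by rw [potential_eq_zero_of_isNash hG (not_not.mp hx), Nat.cast_zero])
    (fun x hx => potential_le_expect_stepPMF_add_one hG hx)
  rwa [walk, PMF.expect_pure] at this

end CircleGame

/-- There is a constant `c > 0` such that for every even `n ≥ 4` and every
circle game with `n` players, all of type 3, the expected number of steps of the random
best response dynamics started in the state where players `0, …, n/2 - 1` play their
0-strategy and players `n/2, …, n-1` play their 1-strategy is at least `c·n^2`. -/
theorem circle_random_dynamics_lower_bound :
    ∃ c : ℝ≥0, 0 < c ∧
      ∀ (n : ℕ) [NeZero n], 4 ≤ n → Even n →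
        ∀ G : CircleGame n, (∀ i, G.IsType3 i) →
          (c : ℝ≥0∞) * (n : ℝ≥0∞) ^ 2 ≤
            G.expTime (fun i => decide (n / 2 ≤ (i : ℕ))) := by
  refine ⟨4⁻¹, by norm_num, fun n _ _ heven G hG => ?_⟩
  obtain ⟨m, rfl⟩ := heven
  have hpot : CircleGame.potential (fun i : Fin (m + m) => decide ((m + m) / 2 ≤ (i : ℕ)))
      = m * m := by
    rw [CircleGame.potential, CircleGame.numOne_decide_le (by omega),
      show m + m - (m + m) / 2 = m by omega, show m + m - m = m by omega]
  calc ((4⁻¹ : ℝ≥0) : ℝ≥0∞) * ((m + m : ℕ) : ℝ≥0∞) ^ 2 = ((m * m : ℕ) : ℝ≥0∞) := by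
        rw [ENNReal.coe_inv (by norm_num), ENNReal.coe_ofNat,
          show ((m + m : ℕ) : ℝ≥0∞) ^ 2 = 4 * (m * m : ℕ) by push_cast; ring, ← mul_assoc,
          ENNReal.inv_mul_cancel (by norm_num) (by norm_num), one_mul]
    _ ≤ _ := hpot ▸ CircleGame.potential_le_expTime hG _
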